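/- Let A and B be finite abelian groups with gcd(|A|, |B|) = 1. Then every function f : A → B of finite functional degree is constant, and conversely every constant function has functional degree 0. -/
import Mathlib


/-- The discrete difference operator: `(dOp g f) x = f (x + g) - f x`. -/
def dOp {A B : Type*} [AddCommGroup A] [AddCommGroup B] (g : A) (f : A → B) : A → B :=
  fun x => f (x + g) - f x

/-- `f` has functional degree at most `m` (w.r.t. the generating set `A` itself):
all `(m+1)`-fold derivatives vanish. -/
def DegLE {A B : Type*} [AddCommGroup A] [AddCommGroup B] (f : A → B) (m : ℕ) : Prop :=
  ∀ gs : List A, gs.length = m + 1 → gs.foldr (fun g h => dOp g h) f = 0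

/-- If `|A|` and `|B|` are coprime, the functions `A → B` of finite functional degree
are exactly the constant functions (which have functional degree `0`). -/
theorem coprime_finite_degree_constant {A B : Type*} [AddCommGroup A] [AddCommGroup B]
    [Finite A] [Finite B] (h : Nat.Coprime (Nat.card A) (Nat.card B)) :
    (∀ f : A → B, (∃ m, DegLE f m) → ∃ b : B, ∀ a : A, f a = b) ∧
      (∀ b : B, DegLE (fun _ : A => b) 0) := by
  constructor
  · have key : ∀ m (f : A → B), DegLE f m → ∃ b : B, ∀ a : A, f a = b := by
      intro m
      induction m with
      | zero =>
        intro f hf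
        refine ⟨f 0, fun a => ?_⟩
        have := congrFun (hf [a] rfl) 0
        simp only [List.foldr, dOp, Pi.zero_apply, zero_add, sub_eq_zero] at this
        exact this
      | succ m ih =>
        intro f hf
        have hc : ∀ g, dOp g f = 0 := by
          intro g
          have hdeg : DegLE (dOp g f) m := by
            intro gs hgs
            have := hf (gs ++ [g]) (by simp [hgs])
            rwa [List.foldr_append] at this
          obtain ⟨c, hcc⟩ := ih _ hdeg
          have : Fintype A := Fintype.ofFinite A
          have hsum : ∑ x : A, dOp g f x = 0 := by
            simp only [dOp]
            rw [Finset.sum_sub_distrib]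
            rw [Fintype.sum_bijective _ (Equiv.addRight g).bijective (fun x => f (x + g)) f (fun x => rfl)]
            exact sub_self _
          have hcard : Nat.card A • c = 0 := by
            have : ∑ x : A, dOp g f x = Nat.card A • c := by
              simp [hcc, Finset.sum_const, Nat.card_eq_fintype_card]
            rw [this] at hsum
            exact hsum
          have h1 : addOrderOf c ∣ Nat.card A := addOrderOf_dvd_of_nsmul_eq_zero hcard
          have h2 : addOrderOf c ∣ Nat.card B := addOrderOf_dvd_natCard c
          have : addOrderOf c ∣ 1 := h ▸ Nat.dvd_gcd h1 h2
          have hc0 : c = 0 := by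
            rw [← AddMonoid.addOrderOf_eq_one_iff, Nat.eq_one_of_dvd_one this]
          funext x
          rw [hcc x, hc0]
          rfl
        refine ⟨f 0, fun a => ?_⟩
        have := congrFun (hc a) 0
        simp only [dOp, Pi.zero_apply, zero_add, sub_eq_zero] at this
        exact this
    intro f ⟨m, hm⟩
    exact key m f hm
  · intro b gs hgs
    obtain ⟨g, rfl⟩ := List.length_eq_one_iff.mp hgs
    funext x
    simp [dOp]
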